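/- arXiv:1103.4404 — 11 statements merged into one kernel-verified Lean document; each statement's English description precedes it below -/
import Mathlib

section
/- Let V be a finite-dimensional complex vector space, let N be a Nijenhuis-type tensor on V, and let h : V × V → V be a symmetric ℂ-bilinear map satisfying the derivation relation N(h(ξ,η), ζ) + N(η, h(ξ,ζ)) = h(ξ, N(η,ζ)) for all ξ, η, ζ ∈ V. Then for all ξ, η, ζ ∈ V one has h(ξ, N(η,ζ)) = 0 and N(h(ξ,η), ζ) = N(h(ξ,ζ), η). -/
open ComplexConjugate

/-- A Nijenhuis-type tensor on a complex vector space `V`: ℝ-bilinear (additive in each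
argument), alternating, and conjugate-homogeneous in each argument over ℂ. -/
structure IsNijenhuisType {V : Type*} [AddCommGroup V] [Module ℂ V] (N : V → V → V) : Prop where
  add_left : ∀ x y z : V, N (x + y) z = N x z + N y z
  add_right : ∀ x y z : V, N x (y + z) = N x y + N x z
  conj_smul_left : ∀ (c : ℂ) (x y : V), N (c • x) y = conj c • N x y
  conj_smul_right : ∀ (c : ℂ) (x y : V), N x (c • y) = conj c • N x y
  alt : ∀ x y : V, N x y = - N y x

/-- A symmetric ℂ-bilinear map `h : V × V → V`. -/
structure IsSymmCBilinear {V : Type*} [AddCommGroup V] [Module ℂ V] (h : V → V → V) : Prop where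
  add_left : ∀ x y z : V, h (x + y) z = h x z + h y z
  smul_left : ∀ (c : ℂ) (x y : V), h (c • x) y = c • h x y
  add_right : ∀ x y z : V, h x (y + z) = h x y + h x z
  smul_right : ∀ (c : ℂ) (x y : V), h x (c • y) = c • h x y
  symm : ∀ x y : V, h x y = h y x

theorem eq_zero_of_I_smul_eq_conj_I_smul {W : Type*} [AddCommGroup W] [Module ℂ W] {w : W}
    (hw : Complex.I • w = conj Complex.I • w) : w = 0 := by
  have hI : Complex.I - conj Complex.I ≠ 0 := by simp [Complex.conj_I]
  exact (smul_eq_zero.mp (by rw [sub_smul, hw, sub_self])).resolve_left hI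

section Derivation

variable {V : Type*} [AddCommGroup V] [Module ℂ V] {N h : V → V → V}

/- The left side of the derivation relation is conjugate-linear in `ξ` and the right side is
ℂ-linear, so substituting `i ξ` for `ξ` forces both to vanish. -/
theorem IsSymmCBilinear.apply_nijenhuis_eq_zero (hN : IsNijenhuisType N) (hh : IsSymmCBilinear h)
    (hder : ∀ ξ η ζ : V, N (h ξ η) ζ + N η (h ξ ζ) = h ξ (N η ζ)) (ξ η ζ : V) :
    h ξ (N η ζ) = 0 :=
  eq_zero_of_I_smul_eq_conj_I_smul <| calc
    Complex.I • h ξ (N η ζ) = h (Complex.I • ξ) (N η ζ) := (hh.smul_left _ _ _).symm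
    _ = N (h (Complex.I • ξ) η) ζ + N η (h (Complex.I • ξ) ζ) := (hder _ _ _).symm
    _ = conj Complex.I • (N (h ξ η) ζ + N η (h ξ ζ)) := by
      rw [hh.smul_left, hh.smul_left, hN.conj_smul_left, hN.conj_smul_right, smul_add]
    _ = conj Complex.I • h ξ (N η ζ) := by rw [hder]

theorem IsNijenhuisType.apply_comm_of_derivation (hN : IsNijenhuisType N)
    (hh : IsSymmCBilinear h)
    (hder : ∀ ξ η ζ : V, N (h ξ η) ζ + N η (h ξ ζ) = h ξ (N η ζ)) (ξ η ζ : V) :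
    N (h ξ η) ζ = N (h ξ ζ) η := by
  have hsum := hder ξ η ζ
  rw [hh.apply_nijenhuis_eq_zero hN hder] at hsum
  rw [eq_neg_of_add_eq_zero_left hsum, hN.alt η, neg_neg]

end Derivation

theorem stmt0_general {V : Type*} [AddCommGroup V] [Module ℂ V]
    (N : V → V → V) (hN : IsNijenhuisType N)
    (h : V → V → V) (hh : IsSymmCBilinear h)
    (hder : ∀ ξ η ζ : V, N (h ξ η) ζ + N η (h ξ ζ) = h ξ (N η ζ)) :
    ∀ ξ η ζ : V, h ξ (N η ζ) = 0 ∧ N (h ξ η) ζ = N (h ξ ζ) η := fun ξ η ζ =>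
  ⟨hh.apply_nijenhuis_eq_zero hN hder ξ η ζ, hN.apply_comm_of_derivation hh hder ξ η ζ⟩

/-- if a symmetric ℂ-bilinear `h` satisfies the derivation relation
`N(h(ξ,η),ζ) + N(η,h(ξ,ζ)) = h(ξ,N(η,ζ))`, then `h(ξ,N(η,ζ)) = 0` and
`N(h(ξ,η),ζ) = N(h(ξ,ζ),η)`. -/
theorem stmt0 {V : Type*} [AddCommGroup V] [Module ℂ V] [FiniteDimensional ℂ V]
    (N : V → V → V) (hN : IsNijenhuisType N)
    (h : V → V → V) (hh : IsSymmCBilinear h)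
    (hder : ∀ ξ η ζ : V, N (h ξ η) ζ + N η (h ξ ζ) = h ξ (N η ζ)) :
    ∀ ξ η ζ : V, h ξ (N η ζ) = 0 ∧ N (h ξ η) ζ = N (h ξ ζ) η :=
  stmt0_general N hN h hh hder
end

section
/- Let V be a finite-dimensional complex vector space, let N be a Nijenhuis-type tensor on V, let W ⊆ V be the complex linear span of the image {N(x,y) : x, y ∈ V}, and let W^⊥ = {v ∈ V : N(v,w) = 0 for all w ∈ W}. If h : V × V → V is a symmetric ℂ-bilinear map satisfying N(h(ξ,η), ζ) + N(η, h(ξ,ζ)) = h(ξ, N(η,ζ)) for all ξ, η, ζ ∈ V, then: (i) h(x, y) = 0 whenever x ∈ W; (ii) h(x,y) ∈ W^⊥ for all x, y ∈ V; and consequently (iii) if W^⊥ = {0} then h = 0. -/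
/-!
Fix `η, ζ`. In the relation `N(h(ξ,η), ζ) + N(η, h(ξ,ζ)) = h(ξ, N(η,ζ))` the left side is
conjugate-linear in `ξ` while the right side is ℂ-linear, so both vanish: `h` kills the image of
`N`, hence all of `W` by linearity and symmetry. Feeding `w ∈ W` as `ζ` then leaves
`N(h(ξ,η), w) = h(ξ, N(η,w)) = 0`.
-/

open ComplexConjugate

theorem eq_zero_of_map_smul_of_map_conj_smul {V U : Type*} [AddCommGroup V] [Module ℂ V]
    [AddCommGroup U] [Module ℂ U] {f : V → U} (hlin : ∀ (c : ℂ) x, f (c • x) = c • f x)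
    (hconj : ∀ (c : ℂ) x, f (c • x) = conj c • f x) (x : V) : f x = 0 := by
  have h2I : ((2 : ℂ) * Complex.I) • f x = 0 := by
    rw [mul_smul, two_smul]
    nth_rewrite 1 [← hlin]
    rw [hconj, Complex.conj_I, neg_smul, neg_add_cancel]
  simpa [Complex.I_ne_zero] using h2I

theorem IsNijenhuisType.apply_zero_right {V : Type*} [AddCommGroup V] [Module ℂ V]
    {N : V → V → V} (hN : IsNijenhuisType N) (x : V) : N x 0 = 0 := by
  simpa using hN.conj_smul_right 0 x 0

namespace IsSymmCBilinear

variable {V : Type*} [AddCommGroup V] [Module ℂ V] {N h : V → V → V}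
  (hh : IsSymmCBilinear h) (hN : IsNijenhuisType N)
  (hder : ∀ ξ η ζ : V, N (h ξ η) ζ + N η (h ξ ζ) = h ξ (N η ζ))
include hh hN hder

theorem apply_right_image_eq_zero (ξ η ζ : V) : h ξ (N η ζ) = 0 := by
  refine eq_zero_of_map_smul_of_map_conj_smul (f := fun ξ => h ξ (N η ζ))
    (fun c ξ => hh.smul_left c ξ _) (fun c ξ => ?_) ξ
  simp only [← hder, hh.smul_left, hN.conj_smul_left, hN.conj_smul_right, smul_add]

theorem apply_eq_zero_of_mem_span_image {x : V}
    (hx : x ∈ Submodule.span ℂ {v : V | ∃ a b : V, N a b = v}) (y : V) : h x y = 0 := by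
  induction hx using Submodule.span_induction generalizing y with
  | mem v hv =>
    obtain ⟨a, b, rfl⟩ := hv
    rw [hh.symm]
    exact hh.apply_right_image_eq_zero hN hder y a b
  | zero => simpa using hh.smul_left 0 0 y
  | add a b _ _ ha hb => rw [hh.add_left, ha, hb, add_zero]
  | smul c a _ ha => rw [hh.smul_left, ha, smul_zero]

theorem image_apply_eq_zero_of_mem_span_image (x y : V) {w : V}
    (hw : w ∈ Submodule.span ℂ {v : V | ∃ a b : V, N a b = v}) : N (h x y) w = 0 := by
  have H := hder x y w
  rw [hh.symm x w, hh.apply_eq_zero_of_mem_span_image hN hder hw, hN.apply_zero_right,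
    add_zero] at H
  rw [H, hh.apply_right_image_eq_zero hN hder]

end IsSymmCBilinear

theorem stmt1_general {V : Type*} [AddCommGroup V] [Module ℂ V]
    (N : V → V → V) (hN : IsNijenhuisType N)
    (h : V → V → V) (hh : IsSymmCBilinear h)
    (hder : ∀ ξ η ζ : V, N (h ξ η) ζ + N η (h ξ ζ) = h ξ (N η ζ))
    (W : Submodule ℂ V)
    (hW : W = Submodule.span ℂ {v : V | ∃ x y : V, N x y = v}) :
    (∀ x ∈ W, ∀ y : V, h x y = 0) ∧
    (∀ x y : V, ∀ w ∈ W, N (h x y) w = 0) ∧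
    ((∀ v : V, (∀ w ∈ W, N v w = 0) → v = 0) → ∀ x y : V, h x y = 0) := by
  subst hW
  have values_mem_perp : ∀ x y : V, ∀ w ∈ Submodule.span ℂ {v : V | ∃ x y : V, N x y = v},
      N (h x y) w = 0 := fun x y _ hw =>
    hh.image_apply_eq_zero_of_mem_span_image hN hder x y hw
  exact ⟨fun _ hx => hh.apply_eq_zero_of_mem_span_image hN hder hx, values_mem_perp,
    fun hnd x y => hnd _ (values_mem_perp x y)⟩

/-- for `W` the complex span of the image of `N` and
`W^⊥ = {v | N(v,W) = 0}`, any symmetric ℂ-bilinear `h` satisfying the derivation relation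
kills `W` in its first argument, takes values in `W^⊥`, and vanishes if `W^⊥ = 0`. -/
theorem stmt1 {V : Type*} [AddCommGroup V] [Module ℂ V] [FiniteDimensional ℂ V]
    (N : V → V → V) (hN : IsNijenhuisType N)
    (h : V → V → V) (hh : IsSymmCBilinear h)
    (hder : ∀ ξ η ζ : V, N (h ξ η) ζ + N η (h ξ ζ) = h ξ (N η ζ))
    (W : Submodule ℂ V)
    (hW : W = Submodule.span ℂ {v : V | ∃ x y : V, N x y = v}) :
    (∀ x ∈ W, ∀ y : V, h x y = 0) ∧
    (∀ x y : V, ∀ w ∈ W, N (h x y) w = 0) ∧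
    ((∀ v : V, (∀ w ∈ W, N v w = 0) → v = 0) → ∀ x y : V, h x y = 0) :=
  stmt1_general N hN h hh hder W hW
end

section
/- Let N be a Nijenhuis-type tensor on V = ℂ², and let e₁ = (1,0), e₂ = (0,1) be the standard basis. Then for all x = (x₁,x₂) and y = (y₁,y₂) in ℂ² one has N(x,y) = conj(x₁y₂ - x₂y₁) • N(e₁,e₂). In particular, if N ≠ 0 then the set of values of N is exactly the complex line ℂ • N(e₁,e₂), so the complex span of the image of N is one-dimensional. -/
open ComplexConjugate

namespace IsNijenhuisType

variable {V : Type*} [AddCommGroup V] [Module ℂ V] {N : V → V → V}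

theorem apply_self (hN : IsNijenhuisType N) (x : V) : N x x = 0 := by
  have h : (2 : ℂ) • N x x = 0 := by
    rw [two_smul]
    nth_rewrite 2 [hN.alt x x]
    exact add_neg_cancel _
  exact (smul_eq_zero.mp h).resolve_left two_ne_zero

theorem apply_smul_add_smul (hN : IsNijenhuisType N) (e₁ e₂ : V) (a b c d : ℂ) :
    N (a • e₁ + b • e₂) (c • e₁ + d • e₂) = conj (a * d - b * c) • N e₁ e₂ := by
  simp only [hN.add_left, hN.add_right, hN.conj_smul_left, hN.conj_smul_right, hN.apply_self,
    smul_zero, hN.alt e₂ e₁, smul_neg, map_sub, map_mul, sub_smul, mul_smul]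
  abel

end IsNijenhuisType

theorem Prod.eq_fst_smul_add_snd_smul (x : ℂ × ℂ) : x = x.1 • (1, 0) + x.2 • (0, 1) := by
  ext <;> simp

/-- on `V = ℂ²`, a Nijenhuis-type tensor satisfies
`N(x,y) = conj(x₁y₂ - x₂y₁) • N(e₁,e₂)`; in particular, if `N ≠ 0` then the set of values
of `N` is exactly the complex line `ℂ • N(e₁,e₂)`, whose span is one-dimensional. -/
theorem stmt3 (N : ℂ × ℂ → ℂ × ℂ → ℂ × ℂ) (hN : IsNijenhuisType N) :
    (∀ x y : ℂ × ℂ, N x y = conj (x.1 * y.2 - x.2 * y.1) • N (1, 0) (0, 1)) ∧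
    (N ≠ 0 →
      {v : ℂ × ℂ | ∃ x y : ℂ × ℂ, N x y = v} = {v : ℂ × ℂ | ∃ c : ℂ, v = c • N (1, 0) (0, 1)} ∧
      Module.finrank ℂ (Submodule.span ℂ {v : ℂ × ℂ | ∃ x y : ℂ × ℂ, N x y = v}) = 1) := by
  set w := N (1, 0) (0, 1)
  have hformula (x y : ℂ × ℂ) : N x y = conj (x.1 * y.2 - x.2 * y.1) • w := by
    have h := hN.apply_smul_add_smul (1, 0) (0, 1) x.1 x.2 y.1 y.2
    rwa [← x.eq_fst_smul_add_snd_smul, ← y.eq_fst_smul_add_snd_smul] at h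
  refine ⟨hformula, fun hN₀ => ?_⟩
  have hw : w ≠ 0 := fun hw => hN₀ <| by
    funext x y
    simp [hformula, hw]
  have himage : {v : ℂ × ℂ | ∃ x y : ℂ × ℂ, N x y = v} = {v | ∃ c : ℂ, v = c • w} := by
    ext v
    constructor
    · rintro ⟨x, y, rfl⟩
      exact ⟨_, hformula x y⟩
    · rintro ⟨c, rfl⟩
      exact ⟨(conj c, 0), (0, 1), by simp [hformula]⟩
  have hline : {v | ∃ c : ℂ, v = c • w} = ((ℂ ∙ w : Submodule ℂ (ℂ × ℂ)) : Set (ℂ × ℂ)) := by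
    ext v
    simp [Submodule.mem_span_singleton, eq_comm]
  rw [himage, hline, Submodule.span_eq]
  exact ⟨rfl, finrank_span_singleton hw⟩
end

section
/- Let a, α, b, β ∈ ℂ and define the ℝ-linear map J : ℂ² → ℂ² by J(u,v) = (a·u + conj(α)·conj(u), b·u + conj(β)·conj(u) + i·v). Then J ∘ J = -id if and only if the following four equations hold: (a + conj(a))·α = 0, a² + α·conj(α) = -1, (a+i)·b + α·conj(β) = 0, and conj(α)·b + (conj(a)+i)·conj(β) = 0. -/
open ComplexConjugate

/-- The ℝ-linear endomorphism of `ℂ²` encoding the almost complex structure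
`J∂_z = a∂_z + α∂_z̄ + b∂_w + β∂_w̄`, `J∂_w = i∂_w` (a real tangent vector
`u∂_z + ū∂_z̄ + v∂_w + v̄∂_w̄` is encoded as the pair `(u,v)`). -/
noncomputable def Jstr (a α b β : ℂ) (q : ℂ × ℂ) : ℂ × ℂ :=
  (a * q.1 + conj α * conj q.1, b * q.1 + conj β * conj q.1 + Complex.I * q.2)

/-!
Write ℝ-linear maps `ℂ → ℂ` as `u ↦ p u + q ū`; such a map vanishes iff `p = q = 0` (test on
`u = 1` and `u = i`). Expanding `J²` in this form, `J² = -id` says exactly that the four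
coefficients of `J² + id` vanish, and these are the four equations.
-/

open Complex

theorem mul_add_mul_conj_eq_zero_iff (p q : ℂ) :
    (∀ u : ℂ, p * u + q * conj u = 0) ↔ p = 0 ∧ q = 0 := by
  refine ⟨fun h => ?_, fun ⟨hp, hq⟩ u => by simp [hp, hq]⟩
  have h1 : p + q = 0 := by simpa using h 1
  have hI : I * (p - q) = 0 := by linear_combination (by simpa using h I : p * I + q * -I = 0)
  have hpq : p - q = 0 := (mul_eq_zero.mp hI).resolve_left I_ne_zero
  constructor
  · linear_combination (1 / 2 : ℂ) * h1 + (1 / 2 : ℂ) * hpq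
  · linear_combination (1 / 2 : ℂ) * h1 - (1 / 2 : ℂ) * hpq

theorem Jstr_Jstr (a α b β u v : ℂ) :
    Jstr a α b β (Jstr a α b β (u, v)) =
      ((a ^ 2 + α * conj α) * u + (a + conj a) * conj α * conj u,
        ((a + I) * b + α * conj β) * u + (conj α * b + (conj a + I) * conj β) * conj u - v) := by
  simp only [Jstr, map_add, map_mul, conj_conj, Prod.mk.injEq]
  constructor
  · ring
  · linear_combination v * I_mul_I

/-- `J ∘ J = -id` iff the four algebraic equations on `a, α, b, β` hold. -/
theorem stmt6 (a α b β : ℂ) :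
    (∀ p : ℂ × ℂ, Jstr a α b β (Jstr a α b β p) = -p) ↔
    ((a + conj a) * α = 0 ∧
     a ^ 2 + α * conj α = -1 ∧
     (a + Complex.I) * b + α * conj β = 0 ∧
     conj α * b + (conj a + Complex.I) * conj β = 0) := by
  have square_add_id : (∀ p : ℂ × ℂ, Jstr a α b β (Jstr a α b β p) = -p) ↔
      (∀ u : ℂ, (a ^ 2 + α * conj α + 1) * u + (a + conj a) * conj α * conj u = 0) ∧
      (∀ u : ℂ, ((a + I) * b + α * conj β) * u + (conj α * b + (conj a + I) * conj β) * conj u = 0) := by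
    simp only [Prod.forall, Jstr_Jstr, Prod.neg_mk, Prod.mk.injEq]
    refine ⟨fun h => ⟨fun u => ?_, fun u => ?_⟩, fun ⟨h₁, h₂⟩ u v => ⟨?_, ?_⟩⟩
    · linear_combination (h u 0).1
    · linear_combination (h u 0).2
    · linear_combination h₁ u
    · linear_combination h₂ u
  have real_factor : (a + conj a) * conj α = 0 ↔ (a + conj a) * α = 0 := by
    simp only [mul_eq_zero, map_eq_zero]
  rw [square_add_id, mul_add_mul_conj_eq_zero_iff, mul_add_mul_conj_eq_zero_iff, real_factor,
    ← eq_neg_iff_add_eq_zero]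
  tauto
end

section
/- Let u, v ∈ ℂ with |v| < |u|, and set α = -2i·u·v/(|u|² - |v|²). Then i·α·conj(u) = (1 + √(1 + |α|²))·v. -/
open ComplexConjugate

/-!
Write `a = ‖u‖`, `b = ‖v‖`, `D = a² - b² > 0`. Since `u * conj u = a²`, the left side is
`(2a²/D) v`, while `‖α‖ = 2ab/D` and `(D, 2ab, a² + b²)` is a Pythagorean triple, so
`1 + √(1 + ‖α‖²) = 1 + (a² + b²)/D = 2a²/D` as well.
-/

namespace Real

lemma one_add_sq_two_mul_div_sub_sq {a b : ℝ} (h : a ^ 2 - b ^ 2 ≠ 0) :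
    1 + (2 * a * b / (a ^ 2 - b ^ 2)) ^ 2 = ((a ^ 2 + b ^ 2) / (a ^ 2 - b ^ 2)) ^ 2 := by
  field_simp
  ring

lemma one_add_sqrt_one_add_sq_two_mul_div_sub_sq {a b : ℝ} (h : 0 < a ^ 2 - b ^ 2) :
    1 + √(1 + (2 * a * b / (a ^ 2 - b ^ 2)) ^ 2) = 2 * a ^ 2 / (a ^ 2 - b ^ 2) := by
  rw [one_add_sq_two_mul_div_sub_sq h.ne', sqrt_sq (by positivity)]
  field_simp
  ring

end Real

namespace Complex

lemma norm_neg_two_mul_I_mul_mul_div_ofReal (u v : ℂ) {r : ℝ} (hr : 0 ≤ r) :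
    ‖-2 * I * u * v / (r : ℂ)‖ = 2 * ‖u‖ * ‖v‖ / r := by
  simp [norm_real, Real.norm_of_nonneg hr]

lemma I_mul_neg_two_mul_I_mul_mul_div_ofReal_mul_conj (u v : ℂ) (r : ℝ) :
    I * (-2 * I * u * v / (r : ℂ)) * conj u = ((2 * ‖u‖ ^ 2 / r : ℝ) : ℂ) * v := by
  have hu : u * conj u = ((‖u‖ ^ 2 : ℝ) : ℂ) := by rw [mul_conj, normSq_eq_norm_sq]
  push_cast at hu ⊢
  linear_combination (-2 * v / r) * u * conj u * I_mul_I + (2 * v / r) * hu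

end Complex

/-- for `u, v ∈ ℂ` with `|v| < |u|` and `α = -2i·u·v/(|u|² - |v|²)`, one has
`i·α·conj(u) = (1 + √(1 + |α|²))·v`. -/
theorem stmt8 (u v : ℂ) (huv : ‖v‖ < ‖u‖)
    (α : ℂ)
    (hα : α = -2 * Complex.I * u * v / ((‖u‖ ^ 2 - ‖v‖ ^ 2 : ℝ) : ℂ)) :
    Complex.I * α * conj u = ((1 + Real.sqrt (1 + ‖α‖ ^ 2) : ℝ) : ℂ) * v := by
  have hD : 0 < ‖u‖ ^ 2 - ‖v‖ ^ 2 := by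
    have := pow_lt_pow_left₀ huv (norm_nonneg v) two_ne_zero
    linarith
  rw [hα, Complex.norm_neg_two_mul_I_mul_mul_div_ofReal u v hD.le,
    Real.one_add_sqrt_one_add_sq_two_mul_div_sub_sq hD,
    Complex.I_mul_neg_two_mul_I_mul_mul_div_ofReal_mul_conj]
end

section
/- Let b : ℂ × ℂ → ℂ be continuously differentiable over ℝ, and for each point p ∈ ℂ × ℂ define the ℝ-linear map J_p : ℂ² → ℂ² by J_p(u,v) = (i·u, i·v + conj(b(p))·conj(u)). Then: (i) J_p ∘ J_p = -id for every p; (ii) letting E₁, E₂ : ℂ² → ℂ² be the constant vector fields E₁ ≡ (1,0), E₂ ≡ (0,1), and JX the vector field p ↦ J_p(X(p)), the Nijenhuis expression N(p) = [JE₁, JE₂](p) - J_p([E₁, JE₂](p)) - J_p([JE₁, E₂](p)) - [E₁,E₂](p) equals (0, i·D(conj∘b)(p)(0,1) - D(conj∘b)(p)(0,i)), where D f(p)(w) denotes the Fréchet derivative of f at p in direction w. Equivalently, N(p) = (0, 2i·conj(b_w(p))) where b_w = ½(∂b/∂s - i·∂b/∂t) is the Wirtinger derivative in the second coordinate w = s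 + it. -/
open ComplexConjugate

/-- The ℝ-linear map encoding the almost complex structure
`J∂_z = i∂_z + b∂_w̄`, `J∂_w = i∂_w` on `ℝ⁴ = ℂ²` at the point `p`. -/
noncomputable def Jb (b : ℂ × ℂ → ℂ) (p : ℂ × ℂ) (ξ : ℂ × ℂ) : ℂ × ℂ :=
  (Complex.I * ξ.1, Complex.I * ξ.2 + conj (b p) * conj ξ.1)

/-- Lie bracket of vector fields on the flat space `ℂ²`:
`[X,Y](p) = DY(p)(X(p)) - DX(p)(Y(p))`. -/
noncomputable def vbracket (X Y : ℂ × ℂ → ℂ × ℂ) (p : ℂ × ℂ) : ℂ × ℂ :=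
  fderiv ℝ Y p (X p) - fderiv ℝ X p (Y p)

/-- The Nijenhuis expression `N(p) = [JE₁,JE₂](p) - J_p[E₁,JE₂](p) - J_p[JE₁,E₂](p) - [E₁,E₂](p)`
for the constant vector fields `E₁ ≡ (1,0)`, `E₂ ≡ (0,1)`. -/
noncomputable def nijExpr (b : ℂ × ℂ → ℂ) (p : ℂ × ℂ) : ℂ × ℂ :=
  vbracket (fun q => Jb b q (1, 0)) (fun q => Jb b q (0, 1)) p
    - Jb b p (vbracket (fun _ => (1, 0)) (fun q => Jb b q (0, 1)) p)
    - Jb b p (vbracket (fun q => Jb b q (1, 0)) (fun _ => (0, 1)) p)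
    - vbracket (fun _ => (1, 0)) (fun _ => (0, 1)) p

/-!
`J E₂ ≡ (0, i)` is constant and `J E₁ = (i, b̄)`, so each bracket in `N` either vanishes or is a
derivative of `J E₁`, i.e. of `b̄ = conj ∘ b`; since conjugation is ℝ-linear, `D b̄ = conj ∘ D b`.
-/

open Complex

theorem vbracket_const_right (X : ℂ × ℂ → ℂ × ℂ) (v : ℂ × ℂ) (p : ℂ × ℂ) :
    vbracket X (fun _ => v) p = -fderiv ℝ X p v := by
  simp [vbracket]

theorem fderiv_conj_apply {E : Type*} [NormedAddCommGroup E] [NormedSpace ℝ E]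
    (f : E → ℂ) (x ξ : E) :
    fderiv ℝ (fun y => conj (f y)) x ξ = conj (fderiv ℝ f x ξ) := by
  change fderiv ℝ (fun y => star (f y)) x ξ = star (fderiv ℝ f x ξ)
  rw [fderiv_star]
  rfl

section AlmostComplexStructure

variable (b : ℂ × ℂ → ℂ)

theorem Jb_Jb (p ξ : ℂ × ℂ) : Jb b p (Jb b p ξ) = -ξ := by
  ext <;> simp only [Jb, map_mul, conj_I, Prod.fst_neg, Prod.snd_neg]
  · linear_combination ξ.1 * I_mul_I
  · linear_combination ξ.2 * I_mul_I

theorem Jb_one_zero (q : ℂ × ℂ) : Jb b q (1, 0) = (I, conj (b q)) := by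
  simp [Jb]

theorem Jb_zero_one (q : ℂ × ℂ) : Jb b q (0, 1) = (0, I) := by
  simp [Jb]

variable {b}

theorem fderiv_Jb_one_zero_apply {p : ℂ × ℂ} (hb : DifferentiableAt ℝ b p) (ξ : ℂ × ℂ) :
    fderiv ℝ (fun q => Jb b q (1, 0)) p ξ = (0, conj (fderiv ℝ b p ξ)) := by
  have hconj : DifferentiableAt ℝ (fun q => conj (b q)) p :=
    conjCLE.toContinuousLinearMap.differentiableAt.comp p hb
  simp only [Jb_one_zero]
  rw [DifferentiableAt.fderiv_prodMk (differentiableAt_const I) hconj]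
  simp [fderiv_conj_apply]

theorem nijExpr_eq {p : ℂ × ℂ} (hb : DifferentiableAt ℝ b p) :
    nijExpr b p = (0, I * conj (fderiv ℝ b p (0, 1)) - conj (fderiv ℝ b p (0, I))) := by
  simp only [nijExpr, Jb_zero_one, vbracket_const_right, fderiv_const_apply, zero_apply,
    fderiv_Jb_one_zero_apply hb]
  ext
  · simp [Jb]
  · simp [Jb]
    ring

end AlmostComplexStructure

/-- (i) `J_p ∘ J_p = -id`; (ii) the Nijenhuis expression equals
`(0, i·D(conj∘b)(p)(0,1) - D(conj∘b)(p)(0,i))`, equivalently `(0, 2i·conj(b_w(p)))` where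
`b_w = ½(∂b/∂s - i·∂b/∂t)` is the Wirtinger derivative in the second coordinate. -/
theorem stmt12 (b : ℂ × ℂ → ℂ) (hb : ContDiff ℝ 1 b) :
    (∀ (p ξ : ℂ × ℂ), Jb b p (Jb b p ξ) = -ξ) ∧
    (∀ p : ℂ × ℂ,
      nijExpr b p =
        (0, Complex.I * fderiv ℝ (fun q => conj (b q)) p (0, 1)
            - fderiv ℝ (fun q => conj (b q)) p (0, Complex.I)) ∧
      nijExpr b p =
        (0, 2 * Complex.I *
          conj ((fderiv ℝ b p (0, 1) - Complex.I * fderiv ℝ b p (0, Complex.I)) / 2))) := by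
  refine ⟨Jb_Jb b, fun p => ?_⟩
  rw [nijExpr_eq (hb.differentiable one_ne_zero p), fderiv_conj_apply, fderiv_conj_apply]
  refine ⟨rfl, ?_⟩
  simp only [map_div₀, map_sub, map_mul, conj_I, map_ofNat, Prod.mk.injEq, true_and]
  linear_combination (-conj (fderiv ℝ b p (0, I))) * I_mul_I
end

section
/- For each point p = (z,w) ∈ ℂ × ℂ define the ℝ-linear map J_p : ℂ² → ℂ² by J_p(u,v) = (i·u, i·v + conj(w)·conj(u)). Let f : ℂ → ℂ be continuously differentiable over ℝ and define F : ℂ² → ℂ² by F(z,w) = (z, w + f(z)). Then F preserves J, i.e. DF(p)(J_p(ξ)) = J_{F(p)}(DF(p)(ξ)) for every p ∈ ℂ² and every ξ ∈ ℂ², if and only if f satisfies the linear Cauchy-Riemann-type equation Df(z)(1) + i·Df(z)(i) = i·conj(f(z)) for all z ∈ ℂ (equivalently, the Wirtinger derivative f_{z̄} = ½(∂f/∂x + i·∂f/∂y) equals (i/2)·conj(f)). -/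
open ComplexConjugate

/-- The ℝ-linear map at `p = (z,w)` encoding the sub-maximally symmetric almost complex
structure `J∂_z = i∂_z + w∂_w̄`, `J∂_w = i∂_w` on `ℝ⁴ = ℂ²`. -/
noncomputable def Jsub (p : ℂ × ℂ) (ξ : ℂ × ℂ) : ℂ × ℂ :=
  (Complex.I * ξ.1, Complex.I * ξ.2 + conj p.2 * conj ξ.1)

/-!
Writing `F(z,w) = (z, w + f z)`, we have `DF(ξ₁,ξ₂) = (ξ₁, ξ₂ + Df ξ₁)`, so comparing the second
components of `DF ∘ J` and `J ∘ DF` the terms in `w` cancel and `F` preserves `J` exactly when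
`Df(i·u) = i·Df(u) + conj (f z)·conj u` for all `u`. An ℝ-linear map `ℂ → ℂ` is determined by its
values at `1` and `i`, and this identity reduces to its instance at `u = 1`, which after
multiplication by `i` is the Cauchy-Riemann-type equation.
-/

open Complex

theorem fderiv_fiberShift_apply {E G : Type*} [NormedAddCommGroup E] [NormedSpace ℝ E]
    [NormedAddCommGroup G] [NormedSpace ℝ G] {f : E → G} {p : E × G}
    (hf : DifferentiableAt ℝ f p.1) (ξ : E × G) :
    fderiv ℝ (fun q : E × G => (q.1, q.2 + f q.1)) p ξ = (ξ.1, ξ.2 + fderiv ℝ f p.1 ξ.1) := by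
  have h : HasFDerivAt (fun q : E × G => (q.1, q.2 + f q.1)) _ p := hasFDerivAt_fst.prodMk
    (hasFDerivAt_snd.add (hf.hasFDerivAt.comp p (hasFDerivAt_fst (p := p))))
  rw [h.fderiv]
  rfl

theorem LinearMap.map_I_mul_eq_iff (L : ℂ →ₗ[ℝ] ℂ) (c : ℂ) :
    (∀ u : ℂ, L (I * u) = I * L u + c * conj u) ↔ L 1 + I * L I = I * c := by
  have hI : L I = I * L 1 + c ↔ L 1 + I * L I = I * c := by
    constructor
    · intro h
      linear_combination I * h + L 1 * I_sq
    · intro h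
      linear_combination (-I) * h + (L I - c) * I_sq
  constructor
  · intro h
    exact hI.1 (by simpa using h 1)
  · intro h u
    obtain ⟨a, b, rfl⟩ : ∃ a b : ℝ, u = a • (1 : ℂ) + b • I :=
      ⟨u.re, u.im, by simp [Complex.real_smul, re_add_im]⟩
    have hIu : I * (a • (1 : ℂ) + b • I) = a • I + (-b) • (1 : ℂ) := by
      simp only [Complex.real_smul, ofReal_neg]
      linear_combination (b : ℂ) * I_sq
    rw [hIu, map_add, map_add, map_smul, map_smul, map_smul, map_smul, hI.2 h]
    simp only [Complex.real_smul, map_add, map_mul, conj_ofReal, conj_I, map_one, ofReal_neg]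
    linear_combination (-b * L 1) * I_sq

theorem fiberShift_fderiv_comm_Jsub_iff {f : ℂ → ℂ} {p : ℂ × ℂ}
    (hf : DifferentiableAt ℝ f p.1) :
    (∀ ξ : ℂ × ℂ, fderiv ℝ (fun q : ℂ × ℂ => (q.1, q.2 + f q.1)) p (Jsub p ξ)
        = Jsub (p.1, p.2 + f p.1)
            (fderiv ℝ (fun q : ℂ × ℂ => (q.1, q.2 + f q.1)) p ξ)) ↔
      ∀ u : ℂ, fderiv ℝ f p.1 (I * u) = I * fderiv ℝ f p.1 u + conj (f p.1) * conj u := by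
  simp only [fderiv_fiberShift_apply hf, Jsub, Prod.mk.injEq, true_and, map_add]
  constructor
  · intro h u
    linear_combination h (u, 0)
  · intro h ξ
    linear_combination h ξ.1

/-- the fiber shift `F(z,w) = (z, w + f(z))` preserves `J` iff `f` satisfies
the linear Cauchy-Riemann-type equation `Df(z)(1) + i·Df(z)(i) = i·conj(f(z))`
(i.e. `f_z̄ = (i/2)·conj f`). -/
theorem stmt14 (f : ℂ → ℂ) (hf : ContDiff ℝ 1 f)
    (F : ℂ × ℂ → ℂ × ℂ) (hF : ∀ q : ℂ × ℂ, F q = (q.1, q.2 + f q.1)) :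
    (∀ (p ξ : ℂ × ℂ), fderiv ℝ F p (Jsub p ξ) = Jsub (F p) (fderiv ℝ F p ξ)) ↔
    (∀ z : ℂ, fderiv ℝ f z 1 + Complex.I * fderiv ℝ f z Complex.I
        = Complex.I * conj (f z)) := by
  have hdiff : Differentiable ℝ f := hf.differentiable one_ne_zero
  obtain rfl : F = fun q => (q.1, q.2 + f q.1) := funext hF
  have hpoint (p : ℂ × ℂ) :
      (∀ ξ, fderiv ℝ (fun q : ℂ × ℂ => (q.1, q.2 + f q.1)) p (Jsub p ξ)
          = Jsub (p.1, p.2 + f p.1) (fderiv ℝ (fun q : ℂ × ℂ => (q.1, q.2 + f q.1)) p ξ)) ↔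
        fderiv ℝ f p.1 1 + I * fderiv ℝ f p.1 I = I * conj (f p.1) :=
    (fiberShift_fderiv_comm_Jsub_iff (hdiff p.1)).trans
      ((fderiv ℝ f p.1).toLinearMap.map_I_mul_eq_iff _)
  simp only [hpoint]
  exact ⟨fun h z => h (z, 0), fun h p => h p.1⟩
end

section
/- For each point p = (z,w) ∈ ℂ × ℂ define the ℝ-linear map J_p : ℂ² → ℂ² by J_p(u,v) = (i·u, i·v + conj(w)·conj(u)). Then for any real numbers β, t and any z₀ ∈ ℂ, the affine map F(z,w) = (e^{-2iβ}·z + z₀, e^{t+iβ}·w) preserves J: DF(p)(J_p(ξ)) = J_{F(p)}(DF(p)(ξ)) for every p ∈ ℂ² and every ξ ∈ ℂ². -/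
/-! The map `F` is affine with linear part `(u, v) ↦ (a u, b v)`, and such a diagonal map
intertwines `J_p` with `J_{F p}` exactly when `conj (a b) = b`: the only term of `J` that is not
complex linear, `conj w · conj u`, is multiplied by `conj (b w) · conj (a u) = conj (a b) · …`
on one side and by `b` on the other. For `a = e^{-2iβ}`, `b = e^{t+iβ}` one has
`a b = e^{t-iβ}`, whose conjugate is `b`. -/

open ComplexConjugate

noncomputable def diagMul (a b : ℂ) : (ℂ × ℂ) →L[ℝ] ℂ × ℂ :=
  (ContinuousLinearMap.mul ℝ ℂ a).prodMap (ContinuousLinearMap.mul ℝ ℂ b)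

@[simp]
theorem diagMul_apply (a b : ℂ) (ξ : ℂ × ℂ) : diagMul a b ξ = (a * ξ.1, b * ξ.2) := rfl

theorem fderiv_diagMul_add_const (a b : ℂ) (c p : ℂ × ℂ) :
    fderiv ℝ (fun q => diagMul a b q + c) p = diagMul a b :=
  ((diagMul a b).hasFDerivAt.add_const c).fderiv

theorem diagMul_Jsub {a b : ℂ} (hab : conj (a * b) = b) (z : ℂ) (p ξ : ℂ × ℂ) :
    diagMul a b (Jsub p ξ) = Jsub (z, b * p.2) (diagMul a b ξ) := by
  simp only [diagMul_apply, Jsub, Prod.mk.injEq, map_mul]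
  rw [map_mul] at hab
  constructor
  · ring
  · linear_combination (-(conj p.2 * conj ξ.1)) * hab

theorem conj_exp_mul_exp (β t : ℝ) :
    conj (Complex.exp (-2 * Complex.I * β) * Complex.exp (t + Complex.I * β)) =
      Complex.exp (t + Complex.I * β) := by
  rw [← Complex.exp_add, ← Complex.exp_conj]
  congr 1
  apply Complex.ext <;> simp; ring

/-- for any real `β, t` and `z₀ ∈ ℂ`, the affine map
`F(z,w) = (e^{-2iβ}z + z₀, e^{t+iβ}w)` preserves `J`. -/
theorem stmt15 (β t : ℝ) (z₀ : ℂ) (F : ℂ × ℂ → ℂ × ℂ)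
    (hF : ∀ q : ℂ × ℂ,
      F q = (Complex.exp (-2 * Complex.I * (β : ℂ)) * q.1 + z₀,
             Complex.exp ((t : ℂ) + Complex.I * (β : ℂ)) * q.2)) :
    ∀ (p ξ : ℂ × ℂ), fderiv ℝ F p (Jsub p ξ) = Jsub (F p) (fderiv ℝ F p ξ) := by
  intro p ξ
  have hF_affine : F = fun q => diagMul (Complex.exp (-2 * Complex.I * β))
      (Complex.exp (t + Complex.I * β)) q + (z₀, 0) := by
    funext q
    simp [hF]
  rw [hF p, hF_affine, fderiv_diagMul_add_const]
  exact diagMul_Jsub (conj_exp_mul_exp β t) _ p ξ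
end

section
/- For each point p = (z,w,ζ) ∈ ℂ³ define the ℝ-linear map J_p : ℂ³ → ℂ³ by J_p(u,v,q) = (i·u, i·v + conj(w)·conj(u), i·q). Then for every holomorphic (ℂ-differentiable) function Ξ : ℂ × ℂ → ℂ, the map F : ℂ³ → ℂ³ defined by F(z,w,ζ) = (z, w, Ξ(z,ζ)) preserves J: DF(p)(J_p(ξ)) = J_{F(p)}(DF(p)(ξ)) for every p ∈ ℂ³ and every ξ ∈ ℂ³. -/
open ComplexConjugate

/-! The differential of `F` is `(u, v, q) ↦ (u, v, dΞ(u, q))`: the identity on the `z`- and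
`w`-slots and the `ℂ`-linear map `dΞ` into the `ζ`-slot. The only non-holomorphic term of `J`,
`conj w · conj u`, depends on `w` alone, which `F` fixes, so `J_p` and `J_{F p}` agree on the
first two slots, while on the `ζ`-slot `J` is multiplication by `i`, which commutes with `dΞ`. -/

/-- The ℝ-linear map at `p = (z,w,ζ)` encoding the almost complex structure
`J∂_z = i∂_z + w∂_w̄`, `J∂_w = i∂_w`, `J∂_ζ = i∂_ζ` on `ℝ⁶ = ℂ³`
(the DG₂(1) model `M⁴ × ℂ`). -/
noncomputable def J6a (p : ℂ × ℂ × ℂ) (ξ : ℂ × ℂ × ℂ) : ℂ × ℂ × ℂ :=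
  (Complex.I * ξ.1, Complex.I * ξ.2.1 + conj p.2.1 * conj ξ.1, Complex.I * ξ.2.2)

section FiberMap

variable {𝕜 E F G H : Type*} [NontriviallyNormedField 𝕜]
  [NormedAddCommGroup E] [NormedSpace 𝕜 E] [NormedAddCommGroup F] [NormedSpace 𝕜 F]
  [NormedAddCommGroup G] [NormedSpace 𝕜 G] [NormedAddCommGroup H] [NormedSpace 𝕜 H]

open ContinuousLinearMap in
theorem hasFDerivAt_prodMk_fiber {Ξ : E × G → H} {D : E × G →L[𝕜] H} {p : E × F × G}
    (hΞ : HasFDerivAt Ξ D (p.1, p.2.2)) :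
    HasFDerivAt (fun q : E × F × G => (q.1, q.2.1, Ξ (q.1, q.2.2)))
      ((fst 𝕜 E (F × G)).prod (((fst 𝕜 F G).comp (snd 𝕜 E (F × G))).prod
        (D.comp ((fst 𝕜 E (F × G)).prod ((snd 𝕜 F G).comp (snd 𝕜 E (F × G))))))) p :=
  hasFDerivAt_fst.prodMk (hasFDerivAt_snd.fst.prodMk
    (hΞ.comp p (hasFDerivAt_fst.prodMk hasFDerivAt_snd.snd)))

end FiberMap

section ComplexFiberMap

variable {E F G H : Type*}
  [NormedAddCommGroup E] [NormedSpace ℂ E] [NormedAddCommGroup F] [NormedSpace ℂ F]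
  [NormedAddCommGroup G] [NormedSpace ℂ G] [NormedAddCommGroup H] [NormedSpace ℂ H]

theorem fderiv_real_prodMk_fiber_apply {Ξ : E × G → H} {p : E × F × G}
    (hΞ : DifferentiableAt ℂ Ξ (p.1, p.2.2)) (ξ : E × F × G) :
    fderiv ℝ (fun q : E × F × G => (q.1, q.2.1, Ξ (q.1, q.2.2))) p ξ =
      (ξ.1, ξ.2.1, fderiv ℂ Ξ (p.1, p.2.2) (ξ.1, ξ.2.2)) := by
  rw [((hasFDerivAt_prodMk_fiber hΞ.hasFDerivAt).restrictScalars ℝ).fderiv]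
  rfl

end ComplexFiberMap

/-- for any holomorphic `Ξ : ℂ × ℂ → ℂ`, the map
`F(z,w,ζ) = (z, w, Ξ(z,ζ))` preserves `J`. -/
theorem stmt16 (Ξ : ℂ × ℂ → ℂ) (hΞ : Differentiable ℂ Ξ)
    (F : ℂ × ℂ × ℂ → ℂ × ℂ × ℂ)
    (hF : ∀ p : ℂ × ℂ × ℂ, F p = (p.1, p.2.1, Ξ (p.1, p.2.2))) :
    ∀ (p ξ : ℂ × ℂ × ℂ), fderiv ℝ F p (J6a p ξ) = J6a (F p) (fderiv ℝ F p ξ) := by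
  intro p ξ
  obtain rfl : F = fun q => (q.1, q.2.1, Ξ (q.1, q.2.2)) := funext hF
  have hD : fderiv ℂ Ξ (p.1, p.2.2) (Complex.I * ξ.1, Complex.I * ξ.2.2) =
      Complex.I * fderiv ℂ Ξ (p.1, p.2.2) (ξ.1, ξ.2.2) :=
    (fderiv ℂ Ξ (p.1, p.2.2)).map_smul Complex.I (ξ.1, ξ.2.2)
  simp only [fderiv_real_prodMk_fiber_apply (hΞ _), J6a, hD]
end

section
/- For each point p = (z,ζ,w) ∈ ℂ³ define the ℝ-linear map J_p : ℂ³ → ℂ³ by J_p(u,q,v) = (i·u, i·q, i·v + conj(ζ)·conj(u)). Let c ∈ ℂ and let Z, Ξ, W₀, Ψ : ℂ × ℂ → ℂ be holomorphic (ℂ-differentiable) functions of (z,ζ) such that ∂W₀/∂z = (∂Z/∂z)·Ξ - c·ζ and ∂W₀/∂ζ = (∂Z/∂ζ)·Ξ everywhere. Then the map F : ℂ³ → ℂ³ defined by F(z,ζ,w) = (Z(z,ζ), Ξ(z,ζ), conj(c)·w + (i/2)·conj(W₀(z,ζ)) + Ψ(z,ζ)) preserves J: DF(p)(J_p(ξ))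 = J_{F(p)}(DF(p)(ξ)) for every p ∈ ℂ³ and every ξ ∈ ℂ³. -/
/-!
Write `A, B, C, D` for the complex differentials of `Z, Ξ, W₀, Ψ` and `η = (u, q)`. Then
`DF(u, q, v) = (A η, B η, c̄ v + (i/2) conj (C η) + D η)`. The first two components commute
with `J` by `ℂ`-linearity of `A, B`. In the third, the conjugated term turns `i` into `-i`, and
`DF ∘ J - J ∘ DF` reduces to `conj (c ζ u + C η - Ξ · A η)`, which vanishes because the two
hypotheses on `W₀` say exactly `C = Ξ • A - (c ζ) • fst`.
-/

open ComplexConjugate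

/-- The ℝ-linear map at `p = (z,ζ,w)` encoding the sub-maximally symmetric almost complex
structure `J∂_z = i∂_z + ζ∂_w̄`, `J∂_ζ = i∂_ζ`, `J∂_w = i∂_w` on `ℝ⁶ = ℂ³`. -/
noncomputable def J6b (p : ℂ × ℂ × ℂ) (ξ : ℂ × ℂ × ℂ) : ℂ × ℂ × ℂ :=
  (Complex.I * ξ.1, Complex.I * ξ.2.1, Complex.I * ξ.2.2 + conj p.2.1 * conj ξ.1)

open Complex ContinuousLinearMap

noncomputable def symmetryDifferential (A B C D : ℂ × ℂ →L[ℂ] ℂ) (c : ℂ) (ξ : ℂ × ℂ × ℂ) :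
    ℂ × ℂ × ℂ :=
  (A (ξ.1, ξ.2.1), B (ξ.1, ξ.2.1),
    conj c * ξ.2.2 + I / 2 * conj (C (ξ.1, ξ.2.1)) + D (ξ.1, ξ.2.1))

theorem hasFDerivAt_comp_fst_fst_snd {E : Type*} [NormedAddCommGroup E] [NormedSpace ℂ E]
    {f : ℂ × ℂ → E} {p : ℂ × ℂ × ℂ} (hf : DifferentiableAt ℂ f (p.1, p.2.1)) :
    HasFDerivAt (fun x : ℂ × ℂ × ℂ ↦ f (x.1, x.2.1))
      ((fderiv ℂ f (p.1, p.2.1)).restrictScalars ℝ ∘L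
        (fst ℝ ℂ (ℂ × ℂ)).prod (fst ℝ ℂ ℂ ∘L snd ℝ ℂ (ℂ × ℂ))) p :=
  (hf.hasFDerivAt.restrictScalars ℝ).comp p
    ((fst ℝ ℂ (ℂ × ℂ)).prod (fst ℝ ℂ ℂ ∘L snd ℝ ℂ (ℂ × ℂ))).hasFDerivAt

theorem fderiv_symmetry_apply {Z Ξ W₀ Ψ : ℂ × ℂ → ℂ} (hZ : Differentiable ℂ Z)
    (hΞ : Differentiable ℂ Ξ) (hW₀ : Differentiable ℂ W₀) (hΨ : Differentiable ℂ Ψ) (c : ℂ)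
    {F : ℂ × ℂ × ℂ → ℂ × ℂ × ℂ}
    (hF : ∀ x, F x = (Z (x.1, x.2.1), Ξ (x.1, x.2.1),
        conj c * x.2.2 + I / 2 * conj (W₀ (x.1, x.2.1)) + Ψ (x.1, x.2.1)))
    (p ξ : ℂ × ℂ × ℂ) :
    fderiv ℝ F p ξ =
      symmetryDifferential (fderiv ℂ Z (p.1, p.2.1)) (fderiv ℂ Ξ (p.1, p.2.1))
        (fderiv ℂ W₀ (p.1, p.2.1)) (fderiv ℂ Ψ (p.1, p.2.1)) c ξ := by
  rw [funext hF]
  have hw : HasFDerivAt (fun x : ℂ × ℂ × ℂ ↦ x.2.2) (snd ℝ ℂ ℂ ∘L snd ℝ ℂ (ℂ × ℂ)) p :=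
    (snd ℝ ℂ ℂ ∘L snd ℝ ℂ (ℂ × ℂ)).hasFDerivAt
  have hW₀bar := conjCLE.hasFDerivAt.comp p (hasFDerivAt_comp_fst_fst_snd (hW₀ _))
  have hFderiv := (hasFDerivAt_comp_fst_fst_snd (hZ _)).prodMk
    ((hasFDerivAt_comp_fst_fst_snd (hΞ _)).prodMk
      (((hw.const_mul (conj c)).add (hW₀bar.const_mul (I / 2))).add
        (hasFDerivAt_comp_fst_fst_snd (hΨ _))))
  exact DFunLike.congr_fun hFderiv.fderiv ξ

theorem fderiv_eq_smul_sub_smul_fst {Z Ξ W₀ : ℂ × ℂ → ℂ} {c : ℂ}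
    (h1 : ∀ q : ℂ × ℂ, fderiv ℂ W₀ q (1, 0) = fderiv ℂ Z q (1, 0) * Ξ q - c * q.2)
    (h2 : ∀ q : ℂ × ℂ, fderiv ℂ W₀ q (0, 1) = fderiv ℂ Z q (0, 1) * Ξ q) (q : ℂ × ℂ) :
    fderiv ℂ W₀ q = Ξ q • fderiv ℂ Z q - (c * q.2) • fst ℂ ℂ ℂ := by
  refine prod_ext (ext_ring ?_) (ext_ring ?_)
  · simp [h1, mul_comm]
  · simp [h2, mul_comm]

theorem symmetryDifferential_J6b (A B D : ℂ × ℂ →L[ℂ] ℂ) (c Ξ₀ : ℂ) (p p' ξ : ℂ × ℂ × ℂ)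
    (hp' : p'.2.1 = Ξ₀) :
    symmetryDifferential A B (Ξ₀ • A - (c * p.2.1) • fst ℂ ℂ ℂ) D c (J6b p ξ) =
      J6b p' (symmetryDifferential A B (Ξ₀ • A - (c * p.2.1) • fst ℂ ℂ ℂ) D c ξ) := by
  subst hp'
  have hI (T : ℂ × ℂ →L[ℂ] ℂ) : T (I * ξ.1, I * ξ.2.1) = I * T (ξ.1, ξ.2.1) :=
    T.map_smul I (ξ.1, ξ.2.1)
  simp only [symmetryDifferential, J6b, hI, sub_apply, smul_apply, coe_fst', smul_eq_mul,
    map_sub, map_mul, conj_I]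
  refine Prod.ext rfl (Prod.ext rfl ?_)
  linear_combination (conj c * conj p.2.1 * conj ξ.1 - conj p'.2.1 * conj (A (ξ.1, ξ.2.1))) * I_sq

/-- for holomorphic `Z, Ξ, W₀, Ψ` of `(z,ζ)` with
`∂W₀/∂z = Z_z·Ξ - c·ζ` and `∂W₀/∂ζ = Z_ζ·Ξ`, the map
`F(z,ζ,w) = (Z(z,ζ), Ξ(z,ζ), conj(c)·w + (i/2)·conj(W₀(z,ζ)) + Ψ(z,ζ))` preserves `J`. -/
theorem stmt17 (c : ℂ) (Z Ξ W₀ Ψ : ℂ × ℂ → ℂ)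
    (hZ : Differentiable ℂ Z) (hΞ : Differentiable ℂ Ξ)
    (hW₀ : Differentiable ℂ W₀) (hΨ : Differentiable ℂ Ψ)
    (h1 : ∀ q : ℂ × ℂ, fderiv ℂ W₀ q (1, 0) = fderiv ℂ Z q (1, 0) * Ξ q - c * q.2)
    (h2 : ∀ q : ℂ × ℂ, fderiv ℂ W₀ q (0, 1) = fderiv ℂ Z q (0, 1) * Ξ q)
    (F : ℂ × ℂ × ℂ → ℂ × ℂ × ℂ)
    (hF : ∀ p : ℂ × ℂ × ℂ,
      F p = (Z (p.1, p.2.1), Ξ (p.1, p.2.1),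
        conj c * p.2.2 + Complex.I / 2 * conj (W₀ (p.1, p.2.1)) + Ψ (p.1, p.2.1))) :
    ∀ (p ξ : ℂ × ℂ × ℂ), fderiv ℝ F p (J6b p ξ) = J6b (F p) (fderiv ℝ F p ξ) := by
  intro p ξ
  rw [fderiv_symmetry_apply hZ hΞ hW₀ hΨ c hF, fderiv_symmetry_apply hZ hΞ hW₀ hΨ c hF,
    fderiv_eq_smul_sub_smul_fst h1 h2]
  exact symmetryDifferential_J6b _ _ _ c _ p (F p) ξ (by rw [hF])
end

section
/- Let A be a 3×3 complex matrix, and for vectors x, y ∈ ℂ³ let x × y denote the cross product and star the entrywise complex conjugation. Then A satisfies the derivation identity star((A·x) × y) + star(x × (A·y)) = A·star(x × y) for all x, y ∈ ℂ³ if and only if A is skew-Hermitian with zero trace, i.e. Aᴴ = -A and tr(A) = 0 (i.e. A ∈ su(3)). -/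
/-!
The Leibniz defect of the cross product is `(M x) × y + x × (M y) = (tr M) (x × y) - Mᵀ (x × y)`.
Conjugating, the derivation identity says that `conj (tr A) • 1 - Aᴴ` and `A` agree on every
`star (x × y)`; these include the standard basis, so `Aᴴ + A = conj (tr A) • 1`. Taking traces
gives `tr A = 2 conj (tr A)`, whence `tr A = 0` and `Aᴴ = -A`.
-/

open Matrix

theorem cross_mulVec_add_cross_mulVec {R : Type*} [CommRing R] (M : Matrix (Fin 3) (Fin 3) R)
    (x y : Fin 3 → R) :
    (M *ᵥ x) ⨯₃ y + x ⨯₃ (M *ᵥ y) = M.trace • (x ⨯₃ y) - Mᵀ *ᵥ (x ⨯₃ y) := by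
  ext i
  fin_cases i <;> simp [cross_apply, mulVec, dotProduct, Fin.sum_univ_three, trace] <;> ring

theorem exists_cross_eq_single {R : Type*} [CommRing R] (i : Fin 3) :
    ∃ x y : Fin 3 → R, x ⨯₃ y = Pi.single i 1 := by
  fin_cases i
  · exact ⟨Pi.single 1 1, Pi.single 2 1, by ext j; fin_cases j <;> simp [cross_apply]⟩
  · exact ⟨Pi.single 2 1, Pi.single 0 1, by ext j; fin_cases j <;> simp [cross_apply]⟩
  · exact ⟨Pi.single 0 1, Pi.single 1 1, by ext j; fin_cases j <;> simp [cross_apply]⟩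

theorem star_transpose_mulVec {R : Type*} [CommRing R] [StarRing R] {n : Type*} [Fintype n]
    (M : Matrix n n R) (v : n → R) :
    star (Mᵀ *ᵥ v) = Mᴴ *ᵥ star v := by
  rw [star_mulVec, conjTranspose_transpose_eq_transpose_conjTranspose, vecMul_transpose]

theorem star_cross_derivation_iff {R : Type*} [CommRing R] [StarRing R]
    (A : Matrix (Fin 3) (Fin 3) R) :
    (∀ x y : Fin 3 → R, star ((A *ᵥ x) ⨯₃ y) + star (x ⨯₃ (A *ᵥ y)) = A *ᵥ star (x ⨯₃ y)) ↔
      Aᴴ + A = star A.trace • 1 := by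
  have defect : ∀ x y : Fin 3 → R, star ((A *ᵥ x) ⨯₃ y) + star (x ⨯₃ (A *ᵥ y)) =
      (star A.trace • 1 - Aᴴ) *ᵥ star (x ⨯₃ y) := fun x y => by
    rw [← star_add, cross_mulVec_add_cross_mulVec, star_sub, star_smul, star_transpose_mulVec,
      sub_mulVec, smul_mulVec, one_mulVec]
  simp only [defect]
  rw [eq_comm, ← sub_eq_iff_eq_add']
  constructor
  · intro h
    refine ext_of_mulVec_single fun i => ?_
    obtain ⟨x, y, hxy⟩ := exists_cross_eq_single (R := R) i
    simpa [hxy] using h x y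
  · intro h x y
    rw [h]

theorem conjTranspose_add_self_eq_star_trace_smul_one_iff {R : Type*} [Field R] [StarRing R]
    [CharZero R] (A : Matrix (Fin 3) (Fin 3) R) :
    Aᴴ + A = star A.trace • 1 ↔ Aᴴ = -A ∧ A.trace = 0 := by
  refine ⟨fun h => ?_, fun ⟨hH, ht⟩ => by simp [hH, ht]⟩
  have htrace : star A.trace + A.trace = star A.trace * 3 := by
    simpa only [trace_add, trace_conjTranspose, trace_smul, trace_one, Fintype.card_fin,
      Nat.cast_ofNat, smul_eq_mul] using congrArg trace h
  have hstar : A.trace + star A.trace = A.trace * 3 := by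
    simpa only [star_add, star_mul', star_ofNat, star_star] using congrArg star htrace
  have ht : A.trace = 0 := by
    have h3 : (3 : R) * A.trace = 0 := by linear_combination -htrace - 2 * hstar
    simpa only [mul_eq_zero, OfNat.ofNat_ne_zero, false_or] using h3
  refine ⟨?_, ht⟩
  simpa only [ht, star_zero, zero_smul, add_eq_zero_iff_eq_neg] using h

/-- a 3×3 complex matrix `A` satisfies the derivation identity
`star((Ax) × y) + star(x × (Ay)) = A·star(x × y)` for the conjugated cross product on `ℂ³`
iff `A` is skew-Hermitian and traceless, i.e. `A ∈ su(3)`. -/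
theorem stmt18 (A : Matrix (Fin 3) (Fin 3) ℂ) :
    (∀ x y : Fin 3 → ℂ,
      star (crossProduct (A.mulVec x) y) + star (crossProduct x (A.mulVec y))
        = A.mulVec (star (crossProduct x y))) ↔
    (Aᴴ = -A ∧ A.trace = 0) :=
  (star_cross_derivation_iff A).trans (conjTranspose_add_self_eq_star_trace_smul_one_iff A)
end
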